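/- The quaternion algebra (-1,-1) over the field ℚ₂ of 2-adic numbers is a division algebra. -/

import Mathlib

/-! Since `x * star x = normSq x` is central, `x` is invertible as soon as `normSq x ≠ 0`,
so it suffices that the norm form `a² + b² + c² + d²` is anisotropic over `ℚ₂`. Scaling a
nontrivial zero by its coordinate of largest absolute value gives a zero in `ℤ₂` with one
coordinate equal to `1`, and reducing modulo `8` would then write `-1` as a sum of three
squares in `ZMod 8`, where the squares are only `0, 1, 4`. -/

open Quaternion

theorem ZMod.one_add_sq_add_sq_add_sq_ne_zero :
    ∀ a b c : ZMod 8, 1 + a ^ 2 + b ^ 2 + c ^ 2 ≠ 0 := by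
  decide

theorem PadicInt.one_add_sq_add_sq_add_sq_ne_zero (x y z : ℤ_[2]) :
    1 + x ^ 2 + y ^ 2 + z ^ 2 ≠ 0 := fun h => by
  have h8 := congrArg (PadicInt.toZModPow 3) h
  simp only [map_add, map_pow, map_one, map_zero] at h8
  exact ZMod.one_add_sq_add_sq_add_sq_ne_zero _ _ _ h8

theorem Padic.eq_zero_of_sum_sq_eq_zero (v : Fin 4 → ℚ_[2]) (h : ∑ i, v i ^ 2 = 0) : v = 0 := by
  obtain ⟨i, hi⟩ := Finite.exists_max fun j => ‖v j‖
  by_contra hv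
  have hvi : v i ≠ 0 := fun h0 => hv <| funext fun j => by simpa [h0] using hi j
  have hw : ∀ j, ‖v j / v i‖ ≤ 1 := fun j => by
    rw [norm_div, div_le_one (norm_pos_iff.mpr hvi)]
    exact hi j
  let w : Fin 3 → ℤ_[2] := fun k => ⟨v (i.succAbove k) / v i, hw _⟩
  have hsum : ∑ j, (v j / v i) ^ 2 = 0 := by simp [div_pow, ← Finset.sum_div, h]
  rw [Fin.sum_univ_succAbove _ i, Fin.sum_univ_three, div_self hvi] at hsum
  refine PadicInt.one_add_sq_add_sq_add_sq_ne_zero (w 0) (w 1) (w 2) (PadicInt.coe_eq_zero.mp ?_)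
  push_cast
  simpa [w, add_assoc] using hsum

theorem Quaternion.isUnit_of_normSq_ne_zero {R : Type*} [Field R] {a : ℍ[R]} (h : normSq a ≠ 0) :
    IsUnit a :=
  ⟨⟨a, (normSq a)⁻¹ • star a,
    by rw [mul_smul_comm, self_mul_star, ← coe_mul_eq_smul, ← coe_mul, inv_mul_cancel₀ h,
      coe_one],
    by rw [smul_mul_assoc, star_mul_self, ← coe_mul_eq_smul, ← coe_mul, inv_mul_cancel₀ h,
      coe_one]⟩,
    rfl⟩

/-- The quaternion algebra `(-1,-1)` over the 2-adic numbers `ℚ₂` is a division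
algebra: every nonzero element has a two-sided inverse. -/
theorem quaternion_minus_one_minus_one_over_Q2_is_division :
    ∀ x : ℍ[ℚ_[2], -1, -1], x ≠ 0 → ∃ y : ℍ[ℚ_[2], -1, -1], x * y = 1 ∧ y * x = 1 := by
  -- `normSq` is stated for `ℍ[R]`, which unfolds to `ℍ[R, -1, -1]`.
  show ∀ x : ℍ[ℚ_[2]], x ≠ 0 → ∃ y : ℍ[ℚ_[2]], x * y = 1 ∧ y * x = 1
  intro x hx
  have hnorm : normSq x ≠ 0 := fun h0 => hx <|
    (QuaternionAlgebra.linearEquivTuple _ _ _).map_eq_zero_iff.mp <|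
    Padic.eq_zero_of_sum_sq_eq_zero _ <| by
      rw [Fin.sum_univ_four]
      exact (normSq_def' x).symm.trans h0
  obtain ⟨u, rfl⟩ := isUnit_of_normSq_ne_zero hnorm
  exact ⟨↑u⁻¹, u.mul_inv, u.inv_mul⟩
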